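/- The index is additive under composition: if A and B are Fredholm matrices in B(K), then ind(AB) = ind(A) + ind(B). -/

import Mathlib

open Classical

/-- A matrix is row finite if every row has finitely many nonzero entries. -/
def rowFin {K : Type*} [Field K] (A : ℕ → ℕ → K) : Prop := ∀ i, {j | A i j ≠ 0}.Finite

/-- A matrix is column finite if every column has finitely many nonzero entries. -/
def colFin {K : Type*} [Field K] (A : ℕ → ℕ → K) : Prop := ∀ j, {i | A i j ≠ 0}.Finite

/-- `A ∈ B(K)`: row and column finite. -/
def RCF {K : Type*} [Field K] (A : ℕ → ℕ → K) : Prop := rowFin A ∧ colFin A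

/-- `A ∈ M_∞(K)`: finitely many nonzero entries in total. -/
def MInf {K : Type*} [Field K] (A : ℕ → ℕ → K) : Prop :=
  {p : ℕ × ℕ | A p.1 p.2 ≠ 0}.Finite

/-- Matrix multiplication (the sum is finite for row/column finite matrices). -/
noncomputable def matMul {K : Type*} [Field K] (A B : ℕ → ℕ → K) : ℕ → ℕ → K :=
  fun i j => ∑ᶠ k, A i k * B k j

/-- The identity matrix. -/
def idm {K : Type*} [Field K] : ℕ → ℕ → K := fun i j => if i = j then 1 else 0

/-- The `j`-th column of `A` as a finitely supported vector (junk value `0` if the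
column is not finitely supported). -/
noncomputable def col {K : Type*} [Field K] (A : ℕ → ℕ → K) (j : ℕ) : ℕ →₀ K :=
  if h : (Function.support fun i => A i j).Finite then Finsupp.ofSupportFinite _ h else 0

/-- The linear transformation `L_A : V → V`, `x ↦ A x`, on the space `V = ℕ →₀ K`
of finitely supported sequences. -/
noncomputable def LA {K : Type*} [Field K] (A : ℕ → ℕ → K) : (ℕ →₀ K) →ₗ[K] (ℕ →₀ K) :=
  Finsupp.linearCombination K (col A)

/-- `A` is (algebraically) Fredholm: invertible modulo `M_∞(K)`. -/
def Fredholm {K : Type*} [Field K] (A : ℕ → ℕ → K) : Prop :=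
  ∃ A₀ : ℕ → ℕ → K, RCF A₀ ∧ MInf (matMul A A₀ - idm) ∧ MInf (matMul A₀ A - idm)

/-- The Fredholm index `dim ker L_A − dim coker L_A`. -/
noncomputable def indx {K : Type*} [Field K] (A : ℕ → ℕ → K) : ℤ :=
  (Module.finrank K (LinearMap.ker (LA A)) : ℤ)
    - (Module.finrank K ((ℕ →₀ K) ⧸ LinearMap.range (LA A)) : ℤ)

/-- Forward shift matrix `S_i` (ones on the `i`-th subdiagonal). -/
def Sp {K : Type*} [Field K] (i : ℕ) : ℕ → ℕ → K := fun m n => if m = n + i then 1 else 0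

/-- Backward shift matrix `S_{-i}` (ones on the `i`-th superdiagonal). -/
def Sm {K : Type*} [Field K] (i : ℕ) : ℕ → ℕ → K := fun m n => if n = m + i then 1 else 0

/-!
A Fredholm matrix `A` has a quasi-inverse `A₀` with `A₀ A - 1` and `A A₀ - 1` finitely supported,
so `ker L_A` lies in the finite-dimensional range of `L_{A₀ A - 1}` and `V` is spanned by
`im L_A` together with the range of `L_{A A₀ - 1}`. Since `L_{AB} = L_A ∘ L_B`, it remains to show
that the index of linear maps with finite-dimensional kernel and cokernel is additive under
composition. For `f : U → V`, `g : V → W` the dimension `d` of `im f ∩ ker g` and the codimension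
`e` of `im f + ker g` satisfy
`dim ker (g f) = dim ker f + d`, `codim im (g f) = codim im g + e`, `e + dim ker g = codim im f + d`,
and `d`, `e` cancel.
-/

open Module Submodule LinearMap

universe u

namespace LinearMap

variable {K : Type*} [DivisionRing K] {U V W : Type u}
  [AddCommGroup U] [Module K U] [AddCommGroup V] [Module K V] [AddCommGroup W] [Module K W]

noncomputable def fredholmIndex (f : V →ₗ[K] W) : ℤ :=
  (finrank K (ker f) : ℤ) - finrank K (W ⧸ range f)

-- In `Module.rank` these hold without finiteness assumptions; `finrank` is `0` in infinite dimension.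
theorem rank_ker_comp (f : U →ₗ[K] V) (g : V →ₗ[K] W) :
    Module.rank K (ker (g ∘ₗ f)) = Module.rank K (ker f) + Module.rank K ↥(range f ⊓ ker g) := by
  have h := rank_range_add_rank_ker (f.domRestrict (comap f (ker g)))
  rw [range_domRestrict, map_comap_eq, ker_domRestrict,
    (comapSubtypeEquivOfLe (ker_le_comap f)).rank_eq] at h
  rw [ker_comp, ← h, add_comm]

theorem rank_quotient_range_comp (f : U →ₗ[K] V) (g : V →ₗ[K] W) :
    Module.rank K (W ⧸ range (g ∘ₗ f)) =
      Module.rank K (W ⧸ range g) + Module.rank K (V ⧸ (range f ⊔ ker g)) := by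
  have hker : ker ((range (g ∘ₗ f)).mkQ ∘ₗ g) = range f ⊔ ker g := by
    rw [ker_comp, ker_mkQ, range_comp, comap_map_eq]
  have h := rank_quotient_add_rank (map (range (g ∘ₗ f)).mkQ (range g))
  rw [(quotientQuotientEquivQuotient _ _ (range_comp_le_range f g)).rank_eq, ← range_comp,
    ← ((range (g ∘ₗ f)).mkQ ∘ₗ g).quotKerEquivRange.rank_eq, hker] at h
  exact h.symm

theorem rank_quotient_sup_add_rank (p q : Submodule K V) :
    Module.rank K (V ⧸ (p ⊔ q)) + Module.rank K q =
      Module.rank K (V ⧸ p) + Module.rank K ↥(p ⊓ q) := by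
  have hmap := rank_quotient_add_rank (map p.mkQ q)
  rw [(quotientQuotientEquivQuotientSup p q).rank_eq] at hmap
  have hq := rank_range_add_rank_ker (p.mkQ.domRestrict q)
  rw [range_domRestrict, ker_domRestrict, ker_mkQ,
    (equivMapOfInjective q.subtype q.injective_subtype _).rank_eq, map_comap_subtype] at hq
  rw [← hmap, ← hq, add_assoc, inf_comm]

theorem fredholmIndex_comp (f : U →ₗ[K] V) (g : V →ₗ[K] W)
    [FiniteDimensional K (ker f)] [FiniteDimensional K (V ⧸ range f)]
    [FiniteDimensional K (ker g)] [FiniteDimensional K (W ⧸ range g)] :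
    (g ∘ₗ f).fredholmIndex = f.fredholmIndex + g.fredholmIndex := by
  have : FiniteDimensional K ↥(range f ⊓ ker g) := finiteDimensional_of_le inf_le_right
  have hE : Module.rank K (V ⧸ (range f ⊔ ker g)) < Cardinal.aleph0 := by
    refine lt_of_le_of_lt (le_self_add (b := Module.rank K (ker g))) ?_
    rw [rank_quotient_sup_add_rank]
    exact Cardinal.add_lt_aleph0 (rank_lt_aleph0 _ _) (rank_lt_aleph0 _ _)
  have hker : finrank K (ker (g ∘ₗ f)) = finrank K (ker f) + finrank K ↥(range f ⊓ ker g) := by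
    rw [finrank, rank_ker_comp, Cardinal.toNat_add (rank_lt_aleph0 _ _) (rank_lt_aleph0 _ _)]
    rfl
  have hcoker : finrank K (W ⧸ range (g ∘ₗ f)) =
      finrank K (W ⧸ range g) + finrank K (V ⧸ (range f ⊔ ker g)) := by
    rw [finrank, rank_quotient_range_comp, Cardinal.toNat_add (rank_lt_aleph0 _ _) hE]
    rfl
  have hmid : finrank K (V ⧸ (range f ⊔ ker g)) + finrank K (ker g) =
      finrank K (V ⧸ range f) + finrank K ↥(range f ⊓ ker g) := by
    have h := congrArg Cardinal.toNat (rank_quotient_sup_add_rank (range f) (ker g))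
    rwa [Cardinal.toNat_add hE (rank_lt_aleph0 _ _),
      Cardinal.toNat_add (rank_lt_aleph0 _ _) (rank_lt_aleph0 _ _)] at h
  unfold fredholmIndex
  omega

theorem finiteDimensional_ker_of_comp_sub_id (S : V →ₗ[K] W) (T : W →ₗ[K] V)
    [FiniteDimensional K (range (T ∘ₗ S - id))] : FiniteDimensional K (ker S) :=
  finiteDimensional_of_le (S₂ := range (T ∘ₗ S - id)) fun x hx =>
    ⟨-x, by simp [mem_ker.mp hx]⟩

theorem finiteDimensional_quotient_range_of_comp_sub_id (S : V →ₗ[K] W) (T : W →ₗ[K] V)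
    [FiniteDimensional K (range (S ∘ₗ T - id))] : FiniteDimensional K (W ⧸ range S) := by
  refine Module.Finite.of_surjective ((range S).mkQ ∘ₗ (range (S ∘ₗ T - id)).subtype) ?_
  intro z
  obtain ⟨y, rfl⟩ := (range S).mkQ_surjective z
  refine ⟨⟨-(S (T y) - y), neg_mem ⟨y, rfl⟩⟩, ?_⟩
  simp

end LinearMap

section Matrix

variable {K : Type*} [Field K] {A B M N : ℕ → ℕ → K}

theorem MInf.colFin (h : MInf A) : colFin A := fun j =>
  (h.image Prod.fst).subset fun i hi => ⟨(i, j), hi, rfl⟩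

theorem colFin_idm : colFin (idm : ℕ → ℕ → K) := fun j =>
  (Set.finite_singleton j).subset fun i hi => by simpa [idm] using hi

theorem colFin_sub (hM : colFin M) (hN : colFin N) : colFin (M - N) := fun j =>
  ((hM j).union (hN j)).subset fun i hi => by
    by_contra hc
    simp_all

theorem colFin_matMul (hA : colFin A) (hB : colFin B) : colFin (matMul A B) := by
  intro j
  refine ((hB j).biUnion fun k _ => hA k).subset fun i hi => ?_
  obtain ⟨k, hk⟩ : ∃ k, A i k * B k j ≠ 0 := by
    by_contra! hc
    exact hi (finsum_eq_zero_of_forall_eq_zero hc)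
  exact Set.mem_biUnion (right_ne_zero_of_mul hk) (left_ne_zero_of_mul hk)

theorem col_apply (hA : colFin A) (j i : ℕ) : col A j i = A i j := by
  have hfin : (Function.support fun i => A i j).Finite := hA j
  rw [col, dif_pos hfin]
  rfl

theorem LA_single (A : ℕ → ℕ → K) (j : ℕ) : LA A (Finsupp.single j 1) = col A j := by
  simp [LA]

theorem LA_apply (hA : colFin A) (x : ℕ →₀ K) (i : ℕ) :
    LA A x i = ∑ k ∈ x.support, A i k * x k := by
  simp [LA, Finsupp.linearCombination_apply, Finsupp.sum, col_apply hA, mul_comm]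

theorem LA_sub (hM : colFin M) (hN : colFin N) : LA (M - N) = LA M - LA N := by
  ext x i
  simp [LA_apply (colFin_sub hM hN), LA_apply hM, LA_apply hN, sub_mul, Finset.sum_sub_distrib]

theorem LA_idm : LA (idm : ℕ → ℕ → K) = LinearMap.id := by
  ext x i
  simp [LA_apply colFin_idm, idm, Finsupp.single_apply, eq_comm]

theorem LA_matMul (hA : colFin A) (hB : colFin B) : LA (matMul A B) = LA A ∘ₗ LA B := by
  refine Finsupp.basisSingleOne.ext fun j => ?_
  ext i
  simp only [Finsupp.coe_basisSingleOne, LinearMap.comp_apply, LA_single,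
    col_apply (colFin_matMul hA hB), LA_apply hA, col_apply hB, matMul]
  refine finsum_eq_sum_of_support_subset _ fun k hk => ?_
  simpa [col_apply hB] using right_ne_zero_of_mul hk

theorem LA_matMul_sub_idm (hA : colFin A) (hB : colFin B) :
    LA (matMul A B - idm) = LA A ∘ₗ LA B - LinearMap.id := by
  rw [LA_sub (colFin_matMul hA hB) colFin_idm, LA_matMul hA hB, LA_idm]

theorem MInf.finiteDimensional_range_LA (h : MInf A) : FiniteDimensional K (range (LA A)) := by
  set S := Prod.fst '' {p : ℕ × ℕ | A p.1 p.2 ≠ 0}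
  have : Finite S := (h.image _).to_subtype
  have : FiniteDimensional K (Finsupp.supported K K S) :=
    (Finsupp.supportedEquivFinsupp S).symm.finiteDimensional
  refine finiteDimensional_of_le (S₂ := Finsupp.supported K K S) ?_
  rintro _ ⟨x, rfl⟩ i hi
  rw [Finset.mem_coe, Finsupp.mem_support_iff, LA_apply h.colFin] at hi
  obtain ⟨k, -, hk⟩ := Finset.exists_ne_zero_of_sum_ne_zero hi
  exact ⟨(i, k), left_ne_zero_of_mul hk, rfl⟩

theorem Fredholm.finiteDimensional_ker (hA : colFin A) (h : Fredholm A) :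
    FiniteDimensional K (ker (LA A)) := by
  obtain ⟨A₀, hA₀, -, hleft⟩ := h
  have := hleft.finiteDimensional_range_LA
  rw [LA_matMul_sub_idm hA₀.2 hA] at this
  exact finiteDimensional_ker_of_comp_sub_id (LA A) (LA A₀)

theorem Fredholm.finiteDimensional_quotient_range (hA : colFin A) (h : Fredholm A) :
    FiniteDimensional K ((ℕ →₀ K) ⧸ range (LA A)) := by
  obtain ⟨A₀, hA₀, hright, -⟩ := h
  have := hright.finiteDimensional_range_LA
  rw [LA_matMul_sub_idm hA hA₀.2] at this
  exact finiteDimensional_quotient_range_of_comp_sub_id (LA A) (LA A₀)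

end Matrix

theorem stmt11 {K : Type*} [Field K] (A B : ℕ → ℕ → K)
    (hA : RCF A) (hB : RCF B) (hFA : Fredholm A) (hFB : Fredholm B) :
    indx (matMul A B) = indx A + indx B := by
  have := hFA.finiteDimensional_ker hA.2
  have := hFB.finiteDimensional_ker hB.2
  have := hFA.finiteDimensional_quotient_range hA.2
  have := hFB.finiteDimensional_quotient_range hB.2
  change (LA (matMul A B)).fredholmIndex = (LA A).fredholmIndex + (LA B).fredholmIndex
  rw [LA_matMul hA.2 hB.2, fredholmIndex_comp, add_comm]
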